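/- arXiv:2001.06195 — 7 statements merged into one kernel-verified Lean document; each statement's English description precedes it below -/
import Mathlib

section
/- Let κ > 0, δ > 0, γ ≥ 0 and T > 0. Suppose y : [0,T] → ℝ is continuous, nonnegative, differentiable on (0,T), and satisfies y'(t) ≤ −κ y(t)^{2+δ} + γ y(t) for all t ∈ (0,T). Then y(t) ≤ e^{γ t} (κ (1+δ) t)^{−1/(1+δ)} for every t ∈ (0,T]. -/
/-!
Multiplying by the integrating factor `e^{-γt}` removes the linear term: `z = e^{-γt} y` satisfies
`z' ≤ -κ z^{2+δ}`, because `e^{-γt(2+δ)} ≤ e^{-γt}`. Such a `z` is nonincreasing, and while it is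
positive the Bernoulli substitution `w = z^{-(1+δ)}` gives `w' ≥ κ(1+δ)`, hence
`w(t) ≥ κ(1+δ)t`, which is the bound on `z(t)`.
-/

open Set Real

section Bernoulli

variable {z z' : ℝ → ℝ} {κ p a b : ℝ}

theorem rpow_neg_add_le_of_hasDerivAt_le (hp : 0 ≤ p) (hab : a ≤ b)
    (hcont : ContinuousOn z (Icc a b)) (hpos : ∀ s ∈ Icc a b, 0 < z s)
    (hderiv : ∀ s ∈ Ioo a b, HasDerivAt z (z' s) s)
    (hineq : ∀ s ∈ Ioo a b, z' s ≤ -κ * z s ^ (p + 1)) :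
    z a ^ (-p) + κ * p * (b - a) ≤ z b ^ (-p) := by
  have hw : ∀ s ∈ Ioo a b,
      HasDerivAt (fun s => z s ^ (-p) - κ * p * s) (z' s * -p * z s ^ (-p - 1) - κ * p) s :=
    fun s hs =>
      (((hderiv s hs).rpow_const (Or.inl (hpos s (Ioo_subset_Icc_self hs)).ne')).sub
        (hasDerivAt_const_mul (κ * p)))
  have hmono : MonotoneOn (fun s => z s ^ (-p) - κ * p * s) (Icc a b) := by
    refine monotoneOn_of_hasDerivWithinAt_nonneg
      (f' := fun s => z' s * -p * z s ^ (-p - 1) - κ * p) (convex_Icc a b)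
      ((hcont.rpow_const fun s hs => Or.inl (hpos s hs).ne').sub (by fun_prop))
      (fun s hs => ?_) (fun s hs => ?_) <;> rw [interior_Icc] at hs
    · exact (hw s hs).hasDerivWithinAt
    · have hzs := hpos s (Ioo_subset_Icc_self hs)
      have hcancel : z s ^ (p + 1) * z s ^ (-p - 1) = 1 := by
        rw [← rpow_add hzs, show p + 1 + (-p - 1) = 0 by ring, rpow_zero]
      have hfactor : -p * z s ^ (-p - 1) ≤ 0 :=
        mul_nonpos_of_nonpos_of_nonneg (neg_nonpos.2 hp) (rpow_pos_of_pos hzs _).le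
      have hkey : κ * p ≤ z' s * -p * z s ^ (-p - 1) :=
        calc κ * p = -κ * z s ^ (p + 1) * (-p * z s ^ (-p - 1)) := by
              linear_combination (-κ * p) * hcancel
          _ ≤ z' s * (-p * z s ^ (-p - 1)) := mul_le_mul_of_nonpos_right (hineq s hs) hfactor
          _ = z' s * -p * z s ^ (-p - 1) := by ring
      exact sub_nonneg.2 hkey
  have hends := hmono (left_mem_Icc.2 hab) (right_mem_Icc.2 hab) hab
  simp only at hends
  linarith

theorem le_rpow_neg_inv_of_hasDerivAt_le (hκ : 0 < κ) (hp : 0 < p) (hab : a < b)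
    (hcont : ContinuousOn z (Icc a b)) (hnonneg : ∀ s ∈ Icc a b, 0 ≤ z s)
    (hderiv : ∀ s ∈ Ioo a b, HasDerivAt z (z' s) s)
    (hineq : ∀ s ∈ Ioo a b, z' s ≤ -κ * z s ^ (p + 1)) :
    z b ≤ (κ * p * (b - a)) ^ (-p⁻¹) := by
  rcases (hnonneg b (right_mem_Icc.2 hab.le)).eq_or_lt with hzb | hzb
  · rw [← hzb]
    positivity
  have hanti : AntitoneOn z (Icc a b) := by
    refine antitoneOn_of_hasDerivWithinAt_nonpos (f' := z') (convex_Icc a b) hcont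
      (fun s hs => ?_) (fun s hs => ?_) <;> rw [interior_Icc] at hs
    · exact (hderiv s hs).hasDerivWithinAt
    · have := rpow_nonneg (hnonneg s (Ioo_subset_Icc_self hs)) (p + 1)
      nlinarith [hineq s hs]
  have hpos : ∀ s ∈ Icc a b, 0 < z s := fun s hs =>
    hzb.trans_le (hanti hs (right_mem_Icc.2 hab.le) hs.2)
  have hw := rpow_neg_add_le_of_hasDerivAt_le hp.le hab.le hcont hpos hderiv hineq
  have hwa := rpow_pos_of_pos (hpos a (left_mem_Icc.2 hab.le)) (-p)
  rw [← inv_neg, le_rpow_inv_iff_of_neg hzb (by nlinarith [mul_pos hκ hp]) (neg_neg_of_pos hp)]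
  linarith

end Bernoulli

theorem mul_rpow_le_of_le_one {c x q : ℝ} (hc0 : 0 ≤ c) (hc1 : c ≤ 1) (hx : 0 ≤ x)
    (hq : 1 ≤ q) : (c * x) ^ q ≤ c * x ^ q := by
  rw [mul_rpow hc0 hx]
  exact mul_le_mul_of_nonneg_right (rpow_le_self_of_le_one hc0 hc1 hq) (rpow_nonneg hx q)

theorem hasDerivAt_exp_neg_mul_mul {y : ℝ → ℝ} {y' γ s : ℝ} (h : HasDerivAt y y' s) :
    HasDerivAt (fun s => exp (-γ * s) * y s) (exp (-γ * s) * (y' - γ * y s)) s := by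
  have hexp : HasDerivAt (fun s => exp (-γ * s)) (exp (-γ * s) * -γ) s :=
    (hasDerivAt_const_mul (-γ)).exp
  exact (hexp.mul h).congr_deriv (by ring)

theorem stmt4_general (κ δ γ T : ℝ) (hκ : 0 < κ) (hδ : 0 < δ) (hγ : 0 ≤ γ)
    (y y' : ℝ → ℝ)
    (hcont : ContinuousOn y (Set.Icc 0 T))
    (hnonneg : ∀ t ∈ Set.Icc 0 T, 0 ≤ y t)
    (hderiv : ∀ t ∈ Set.Ioo 0 T, HasDerivAt y (y' t) t)
    (hineq : ∀ t ∈ Set.Ioo 0 T, y' t ≤ -κ * y t ^ (2 + δ) + γ * y t) :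
    ∀ t ∈ Set.Ioc 0 T, y t ≤ Real.exp (γ * t) * (κ * (1 + δ) * t) ^ (-(1 + δ)⁻¹) := by
  rintro t ⟨ht0, htT⟩
  have hIcc : Icc 0 t ⊆ Icc 0 T := Icc_subset_Icc_right htT
  have hIoo : Ioo 0 t ⊆ Ioo 0 T := Ioo_subset_Ioo_right htT
  have hz : exp (-γ * t) * y t ≤ (κ * (1 + δ) * (t - 0)) ^ (-(1 + δ)⁻¹) := by
    refine le_rpow_neg_inv_of_hasDerivAt_le (z := fun s => exp (-γ * s) * y s)
      hκ (by linarith) ht0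
      ((by fun_prop : Continuous fun s => exp (-γ * s)).continuousOn.mul (hcont.mono hIcc))
      (fun s hs => mul_nonneg (exp_pos _).le (hnonneg s (hIcc hs)))
      (fun s hs => hasDerivAt_exp_neg_mul_mul (hderiv s (hIoo hs))) (fun s hs => ?_)
    have hys := hnonneg s (Ioo_subset_Icc_self (hIoo hs))
    have hdamp : exp (-γ * s) ≤ 1 := exp_le_one_iff.2 (by nlinarith [hs.1])
    have := mul_rpow_le_of_le_one (exp_pos (-γ * s)).le hdamp hys (q := 2 + δ) (by linarith)
    rw [show 1 + δ + 1 = 2 + δ by ring]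
    linarith [mul_le_mul_of_nonneg_left (hineq s (hIoo hs)) (exp_pos (-γ * s)).le,
      mul_le_mul_of_nonneg_left this hκ.le]
  calc y t = exp (γ * t) * (exp (-γ * t) * y t) := by
        rw [← mul_assoc, ← exp_add, neg_mul, add_neg_cancel, exp_zero, one_mul]
    _ ≤ exp (γ * t) * (κ * (1 + δ) * t) ^ (-(1 + δ)⁻¹) := by
        rw [sub_zero] at hz
        gcongr

/-- If `y ≥ 0` is continuous on `[0,T]`, differentiable on `(0,T)` and
satisfies `y' ≤ −κ y^{2+δ} + γ y` there, then `y(t) ≤ e^{γt} (κ(1+δ)t)^{−1/(1+δ)}`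
on `(0,T]`. -/
theorem stmt4 (κ δ γ T : ℝ) (hκ : 0 < κ) (hδ : 0 < δ) (hγ : 0 ≤ γ) (hT : 0 < T)
    (y y' : ℝ → ℝ)
    (hcont : ContinuousOn y (Set.Icc 0 T))
    (hnonneg : ∀ t ∈ Set.Icc 0 T, 0 ≤ y t)
    (hderiv : ∀ t ∈ Set.Ioo 0 T, HasDerivAt y (y' t) t)
    (hineq : ∀ t ∈ Set.Ioo 0 T, y' t ≤ -κ * y t ^ (2 + δ) + γ * y t) :
    ∀ t ∈ Set.Ioc 0 T, y t ≤ Real.exp (γ * t) * (κ * (1 + δ) * t) ^ (-(1 + δ)⁻¹) :=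
  stmt4_general κ δ γ T hκ hδ hγ y y' hcont hnonneg hderiv hineq
end

section
/- Let 0 ≤ t₀ < T, A ≥ 0, and let σ : [0,∞) → [0,∞) be monotonically increasing with σ(s) → ∞ as s → ∞. For each ν > 0 let y_ν : [t₀,T] → [0,∞) be continuously differentiable with y_ν(t₀) = 0 and y_ν'(t) ≤ A − y_ν(t)² σ(y_ν(t)/ν) for all t ∈ [t₀,T]. Then for every ε > 0 there exists ν₀ > 0 such that y_ν(t) ≤ ε for all t ∈ [t₀,T] and all 0 < ν ≤ ν₀; in particular lim_{ν→0} y_ν(T) = 0. -/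
open Set Filter Topology

/-! At the first time `y_ν` reaches the level `ε`, the differential inequality gives
`y_ν' ≤ A - ε² σ(ε/ν)`, which is negative once `ν` is so small that `σ(ε/ν) > A/ε²`;
a function with negative derivative at every crossing of a level cannot cross it. -/

theorem le_of_hasDerivWithinAt_neg_of_eq {f f' : ℝ → ℝ} {a b c : ℝ}
    (hf : ∀ t ∈ Icc a b, HasDerivWithinAt f (f' t) (Icc a b) t) (ha : f a ≤ c)
    (hneg : ∀ t ∈ Ico a b, f t = c → f' t < 0) : ∀ t ∈ Icc a b, f t ≤ c := by
  have hf_right : ∀ t ∈ Ico a b, HasDerivWithinAt f (f' t) (Ici t) t := fun t ht =>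
    (hf t (Ico_subset_Icc_self ht)).mono_of_mem_nhdsWithin <|
      mem_of_superset (Icc_mem_nhdsGE ht.2) (Icc_subset_Icc_left ht.1)
  intro t ht
  exact image_le_of_deriv_right_lt_deriv_boundary'
    (fun t ht => (hf t ht).continuousWithinAt) hf_right ha continuousOn_const
    (fun t _ => hasDerivWithinAt_const t _ c) hneg ht

theorem exists_pos_forall_lt_comp_div_of_tendsto_atTop {σ : ℝ → ℝ}
    (hσ : Tendsto σ atTop atTop) (B : ℝ) {ε : ℝ} (hε : 0 < ε) :
    ∃ ν₀ > 0, ∀ ν, 0 < ν → ν ≤ ν₀ → B < σ (ε / ν) := by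
  obtain ⟨S, hS⟩ := eventually_atTop.1 (hσ.eventually_gt_atTop B)
  have hS₁ : 0 < max S 1 := lt_max_of_lt_right one_pos
  refine ⟨ε / max S 1, by positivity, fun ν hν hνν₀ => hS _ ?_⟩
  calc S ≤ max S 1 := le_max_left S 1
    _ = ε / (ε / max S 1) := by field_simp
    _ ≤ ε / ν := div_le_div_of_nonneg_left hε.le hν hνν₀

theorem tendsto_nhdsGT_zero_of_forall_le {f : ℝ → ℝ} (hnn : ∀ ν, 0 < ν → 0 ≤ f ν)
    (hle : ∀ ε > 0, ∃ ν₀ > 0, ∀ ν, 0 < ν → ν ≤ ν₀ → f ν ≤ ε) :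
    Tendsto f (𝓝[>] 0) (𝓝 0) := by
  rw [Metric.tendsto_nhdsWithin_nhds]
  intro ε hε
  obtain ⟨ν₀, hν₀, hf⟩ := hle (ε / 2) (half_pos hε)
  refine ⟨ν₀, hν₀, fun ν (hν : 0 < ν) hdist => ?_⟩
  rw [Real.dist_eq, sub_zero, abs_of_pos hν] at hdist
  rw [Real.dist_eq, sub_zero, abs_of_nonneg (hnn ν hν)]
  linarith [hf ν hν hdist.le]

theorem stmt5_general (t₀ T A : ℝ) (ht₀T : t₀ < T)
    (σ : ℝ → ℝ)
    (hσtop : Tendsto σ atTop atTop)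
    (y y' : ℝ → ℝ → ℝ)
    (hy0 : ∀ ν, 0 < ν → y ν t₀ = 0)
    (hynn : ∀ ν, 0 < ν → ∀ t ∈ Set.Icc t₀ T, 0 ≤ y ν t)
    (hyderiv : ∀ ν, 0 < ν → ∀ t ∈ Set.Icc t₀ T,
      HasDerivWithinAt (y ν) (y' ν t) (Set.Icc t₀ T) t)
    (hineq : ∀ ν, 0 < ν → ∀ t ∈ Set.Icc t₀ T,
      y' ν t ≤ A - (y ν t) ^ 2 * σ (y ν t / ν)) :
    (∀ ε > 0, ∃ ν₀ > 0, ∀ ν, 0 < ν → ν ≤ ν₀ → ∀ t ∈ Set.Icc t₀ T, y ν t ≤ ε) ∧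
      Tendsto (fun ν => y ν T) (𝓝[>] (0 : ℝ)) (𝓝 0) := by
  have uniform : ∀ ε > 0, ∃ ν₀ > 0, ∀ ν, 0 < ν → ν ≤ ν₀ → ∀ t ∈ Icc t₀ T, y ν t ≤ ε := by
    intro ε hε
    obtain ⟨ν₀, hν₀, hσbig⟩ := exists_pos_forall_lt_comp_div_of_tendsto_atTop hσtop (A / ε ^ 2) hε
    refine ⟨ν₀, hν₀, fun ν hν hνν₀ => ?_⟩
    refine le_of_hasDerivWithinAt_neg_of_eq (hyderiv ν hν) (by rw [hy0 ν hν]; exact hε.le) ?_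
    intro t ht hyt
    have hA : A < ε ^ 2 * σ (ε / ν) := by
      rw [← div_lt_iff₀' (by positivity)]
      exact hσbig ν hν hνν₀
    have := hineq ν hν t (Ico_subset_Icc_self ht)
    rw [hyt] at this
    linarith
  have hT : T ∈ Icc t₀ T := right_mem_Icc.2 ht₀T.le
  refine ⟨uniform, tendsto_nhdsGT_zero_of_forall_le (fun ν hν => hynn ν hν T hT) ?_⟩
  intro ε hε
  obtain ⟨ν₀, hν₀, hy⟩ := uniform ε hε
  exact ⟨ν₀, hν₀, fun ν hν hνν₀ => hy ν hν hνν₀ T hT⟩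

/-- Let `0 ≤ t₀ < T`, `A ≥ 0`, and let `σ : [0,∞) → [0,∞)` be monotone
increasing with `σ(s) → ∞` as `s → ∞`. If, for each `ν > 0`, `y_ν : [t₀,T] → [0,∞)` is
continuously differentiable with `y_ν(t₀) = 0` and
`y_ν'(t) ≤ A − y_ν(t)² σ(y_ν(t)/ν)` on `[t₀,T]`, then for every `ε > 0` there is `ν₀ > 0`
with `y_ν(t) ≤ ε` for all `t ∈ [t₀,T]` and all `0 < ν ≤ ν₀`; in particular
`y_ν(T) → 0` as `ν → 0⁺`. -/
theorem stmt5 (t₀ T A : ℝ) (ht₀ : 0 ≤ t₀) (ht₀T : t₀ < T) (hA : 0 ≤ A)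
    (σ : ℝ → ℝ)
    (hσnn : ∀ s, 0 ≤ s → 0 ≤ σ s)
    (hσmono : MonotoneOn σ (Set.Ici 0))
    (hσtop : Tendsto σ atTop atTop)
    (y y' : ℝ → ℝ → ℝ)
    (hy0 : ∀ ν, 0 < ν → y ν t₀ = 0)
    (hynn : ∀ ν, 0 < ν → ∀ t ∈ Set.Icc t₀ T, 0 ≤ y ν t)
    (hyderiv : ∀ ν, 0 < ν → ∀ t ∈ Set.Icc t₀ T,
      HasDerivWithinAt (y ν) (y' ν t) (Set.Icc t₀ T) t)
    (hy'cont : ∀ ν, 0 < ν → ContinuousOn (y' ν) (Set.Icc t₀ T))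
    (hineq : ∀ ν, 0 < ν → ∀ t ∈ Set.Icc t₀ T,
      y' ν t ≤ A - (y ν t) ^ 2 * σ (y ν t / ν)) :
    (∀ ε > 0, ∃ ν₀ > 0, ∀ ν, 0 < ν → ν ≤ ν₀ → ∀ t ∈ Set.Icc t₀ T, y ν t ≤ ε) ∧
      Tendsto (fun ν => y ν T) (𝓝[>] (0 : ℝ)) (𝓝 0) :=
  stmt5_general t₀ T A ht₀T σ hσtop y y' hy0 hynn hyderiv hineq
end

section
/- Let f : [0,∞) → [0,∞) satisfy f(0) = 0, sup_{z>0} f(z)/z < ∞, and limsup_{z→∞} f(z)/z = 0. Then there exists a continuous, strictly monotonically increasing function F : [0,∞) → [0,∞) such that: (1) F(z) ≥ f(z) for all z ≥ 0; (2) F(0) = 0 and F(z) → ∞ as z → ∞; (3) limsup_{z→∞} F(z)/z = 0. Moreover the inverse F⁻¹ : [0,∞) → [0,∞) can be written as F⁻¹(y) = σ(√y)·y where (4) σ : [0,∞) → [0,∞) is continuous and y ↦ σ(√y) is monotonically increasing; (5) there exists σ₀ > 0 with σ(√y) ≥ σ₀ for all y ≥ 0; and (6) σ(√y) → ∞ as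 y → ∞. -/
/-!
Let `M` bound `f z / z`. The tail suprema `G s = sup {f w / w : w ≥ s}` decrease to `0`,
and `f z / z ≤ G (f z / M)` because `f z ≤ M z`. Hence `u = 1 / (G (· / M) + ε)`, with
`ε > 0` vanishing at `∞`, is increasing, bounded below, tends to `∞` and satisfies
`u (f z) · f z ≤ z`. Averaging `u` over unit intervals gives a continuous increasing
`v ≤ u` with the same properties, so `Φ y = v y · y` is an increasing homeomorphism of
`[0, ∞)` with `Φ (f z) ≤ z`. Take `F = Φ⁻¹` and `σ s = v (s²)`; then
`F z / z = 1 / v (F z) → 0`.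
-/

open Set Filter Topology

section RatioTailSup

variable {f : ℝ → ℝ} {M : ℝ}

noncomputable def ratioTailSup (f : ℝ → ℝ) (s : ℝ) : ℝ :=
  sSup ((fun w => f w / w) '' (Ioi 0 ∩ Ici s))

lemma nonempty_Ioi_inter_Ici (s : ℝ) : (Ioi (0 : ℝ) ∩ Ici s).Nonempty :=
  ⟨max s 1, show (0 : ℝ) < max s 1 from lt_max_of_lt_right one_pos, le_max_left s 1⟩

variable (hM : ∀ w, 0 < w → f w / w ≤ M)
include hM

lemma bddAbove_ratio_image (s : ℝ) : BddAbove ((fun w => f w / w) '' (Ioi 0 ∩ Ici s)) :=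
  ⟨M, by rintro _ ⟨w, hw, rfl⟩; exact hM w hw.1⟩

lemma div_le_ratioTailSup {s w : ℝ} (hw : 0 < w) (hs : s ≤ w) : f w / w ≤ ratioTailSup f s :=
  le_csSup (bddAbove_ratio_image hM s) ⟨w, ⟨hw, hs⟩, rfl⟩

lemma ratioTailSup_le (s : ℝ) : ratioTailSup f s ≤ M :=
  csSup_le ((nonempty_Ioi_inter_Ici s).image _) (by rintro _ ⟨w, hw, rfl⟩; exact hM w hw.1)

lemma antitone_ratioTailSup : Antitone (ratioTailSup f) := fun _ t hst =>
  csSup_le_csSup (bddAbove_ratio_image hM _) ((nonempty_Ioi_inter_Ici t).image _)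
    (image_mono (inter_subset_inter_right _ (Ici_subset_Ici.2 hst)))

lemma ratioTailSup_nonneg (hfnn : ∀ z, 0 ≤ z → 0 ≤ f z) (s : ℝ) :
    0 ≤ ratioTailSup f s := by
  obtain ⟨w, hw, hsw⟩ := nonempty_Ioi_inter_Ici s
  exact (div_nonneg (hfnn w hw.le) hw.le).trans (div_le_ratioTailSup hM hw hsw)

lemma tendsto_ratioTailSup (hfnn : ∀ z, 0 ≤ z → 0 ≤ f z)
    (hsub : limsup (fun z => f z / z) atTop = 0) : Tendsto (ratioTailSup f) atTop (𝓝 0) := by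
  refine tendsto_order.2 ⟨fun b hb => .of_forall fun s =>
    hb.trans_le (ratioTailSup_nonneg hM hfnn s), fun b hb => ?_⟩
  have hbdd : IsBoundedUnder (· ≤ ·) atTop (fun z => f z / z) :=
    ⟨M, eventually_map.2 (eventually_gt_atTop 0 |>.mono hM)⟩
  obtain ⟨Z, hZ⟩ :=
    eventually_atTop.1 (eventually_lt_of_limsup_lt (hsub.trans_lt (half_pos hb)) hbdd)
  filter_upwards [eventually_ge_atTop Z] with s hs
  refine (csSup_le ((nonempty_Ioi_inter_Ici s).image _) ?_).trans_lt (half_lt_self hb)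
  rintro _ ⟨w, hw, rfl⟩
  exact (hZ w (hs.trans hw.2)).le

end RatioTailSup

theorem exists_monotone_tendsto_atTop_mul_le {f : ℝ → ℝ} {M : ℝ} (hf0 : f 0 = 0)
    (hfnn : ∀ z, 0 ≤ z → 0 ≤ f z) (hM0 : 0 < M) (hM : ∀ z, 0 < z → f z / z ≤ M)
    (hsub : limsup (fun z => f z / z) atTop = 0) :
    ∃ u : ℝ → ℝ, Monotone u ∧ Tendsto u atTop atTop ∧ (∀ t, (M + 1)⁻¹ ≤ u t) ∧
      ∀ z, 0 ≤ z → u (f z) * f z ≤ z := by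
  set g : ℝ → ℝ := fun t => ratioTailSup f (t / M) + (max t 1)⁻¹
  have hg_pos : ∀ t, 0 < g t := fun t =>
    add_pos_of_nonneg_of_pos (ratioTailSup_nonneg hM hfnn _)
      (inv_pos.2 (lt_max_of_lt_right one_pos))
  have hg_anti : Antitone g := fun s t hst =>
    add_le_add (antitone_ratioTailSup hM (div_le_div_of_nonneg_right hst hM0.le))
      (inv_anti₀ (lt_max_of_lt_right one_pos) (max_le_max_right 1 hst))
  have hg_le : ∀ t, g t ≤ M + 1 := fun t =>
    add_le_add (ratioTailSup_le hM _) (inv_le_one_of_one_le₀ (le_max_right t 1))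
  have hg_lim : Tendsto g atTop (𝓝 0) := by
    simpa using ((tendsto_ratioTailSup hM hfnn hsub).comp (tendsto_id.atTop_div_const hM0)).add
      (tendsto_inv_atTop_zero.comp (tendsto_atTop_mono (le_max_left · 1) tendsto_id))
  refine ⟨fun t => (g t)⁻¹, fun s t hst => inv_anti₀ (hg_pos t) (hg_anti hst),
    tendsto_inv_nhdsGT_zero.comp (tendsto_nhdsWithin_iff.2 ⟨hg_lim, .of_forall hg_pos⟩),
    fun t => inv_anti₀ (hg_pos t) (hg_le t), fun z hz => ?_⟩
  rcases hz.eq_or_lt with rfl | hz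
  · simp [hf0]
  have hfz : f z / M ≤ z := (div_le_iff₀' hM0).2 ((div_le_iff₀ hz).1 (hM z hz))
  rw [inv_mul_le_iff₀ (hg_pos _), ← div_le_iff₀ hz]
  exact (div_le_ratioTailSup hM hz hfz).trans (le_add_of_nonneg_right (by positivity))

section SlidingAverage

open MeasureTheory intervalIntegral

noncomputable def slidingAverage (u : ℝ → ℝ) (y : ℝ) : ℝ :=
  ∫ t in (y - 1)..y, u t

variable {u : ℝ → ℝ} (hu : Monotone u)
include hu

lemma continuous_slidingAverage : Continuous (slidingAverage u) := by
  have hprim : Continuous fun y => ∫ t in (0 : ℝ)..y, u t :=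
    continuous_primitive (fun _ _ => hu.intervalIntegrable) 0
  have heq : slidingAverage u =
      fun y => (∫ t in (0 : ℝ)..y, u t) - ∫ t in (0 : ℝ)..(y - 1), u t :=
    funext fun y => (integral_interval_sub_left hu.intervalIntegrable hu.intervalIntegrable).symm
  rw [heq]
  exact hprim.sub (hprim.comp (continuous_sub_right 1))

lemma monotone_slidingAverage : Monotone (slidingAverage u) := by
  intro a b hab
  have hshift : slidingAverage u b = ∫ t in (a - 1)..a, u (t + (b - a)) := by
    rw [integral_comp_add_right u (b - a), slidingAverage]
    congr 1 <;> ring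
  rw [hshift]
  exact integral_mono_on (by linarith) hu.intervalIntegrable
    (hu.comp (monotone_id.add_const _)).intervalIntegrable
    fun t _ => hu (le_add_of_nonneg_right (sub_nonneg.2 hab))

lemma le_slidingAverage (y : ℝ) : u (y - 1) ≤ slidingAverage u y := by
  simpa [slidingAverage] using integral_mono_on (sub_le_self y zero_le_one)
    (intervalIntegrable_const (μ := volume)) hu.intervalIntegrable fun t ht => hu ht.1

lemma slidingAverage_le (y : ℝ) : slidingAverage u y ≤ u y := by
  simpa [slidingAverage] using integral_mono_on (sub_le_self y zero_le_one)
    hu.intervalIntegrable (intervalIntegrable_const (μ := volume)) fun t ht => hu ht.2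

end SlidingAverage

theorem Monotone.exists_continuous_monotone_le {u : ℝ → ℝ} (hu : Monotone u)
    (hu_top : Tendsto u atTop atTop) {c : ℝ} (hc : ∀ t, c ≤ u t) :
    ∃ v : ℝ → ℝ, Continuous v ∧ Monotone v ∧ v ≤ u ∧ (∀ t, c ≤ v t) ∧
      Tendsto v atTop atTop :=
  ⟨slidingAverage u, continuous_slidingAverage hu, monotone_slidingAverage hu,
    slidingAverage_le hu, fun t => (hc _).trans (le_slidingAverage hu t),
    tendsto_atTop_mono (le_slidingAverage hu)
      (hu_top.comp (tendsto_atTop_add_const_right _ _ tendsto_id))⟩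

section MulSelf

variable {v : ℝ → ℝ}

theorem exists_orderIso_apply_eq_mul (hcont : Continuous v) (hmono : Monotone v)
    (hpos : ∀ y, 0 < v y) : ∃ Φ : ℝ ≃o ℝ, ∀ y, 0 ≤ y → Φ y = v y * y := by
  set φ : ℝ → ℝ := fun y => v (max y 0) * y
  have hneg : ∀ y ≤ 0, φ y = v 0 * y := fun y hy => by simp only [φ, max_eq_right hy]
  have hnonneg : ∀ y, 0 ≤ y → φ y = v y * y := fun y hy => by simp only [φ, max_eq_left hy]
  have hstrict : StrictMono φ := by
    refine StrictMonoOn.Iic_union_Ici (a := 0) (fun a ha b hb hab => ?_) (fun a ha b hb hab => ?_)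
    · rw [hneg a ha, hneg b hb]
      exact mul_lt_mul_of_pos_left hab (hpos 0)
    · rw [hnonneg a ha, hnonneg b hb]
      exact (mul_le_mul_of_nonneg_right (hmono hab.le) ha).trans_lt
        (mul_lt_mul_of_pos_left hab (hpos b))
  have htop : Tendsto φ atTop atTop := by
    refine tendsto_atTop_mono' _ ?_ (tendsto_id.const_mul_atTop (hpos 0))
    filter_upwards [eventually_ge_atTop 0] with y hy
    rw [hnonneg y hy]
    exact mul_le_mul_of_nonneg_right (hmono hy) hy
  have hbot : Tendsto φ atBot atBot :=
    (tendsto_id.const_mul_atBot (hpos 0)).congr'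
      (eventually_le_atBot 0 |>.mono fun y hy => (hneg y hy).symm)
  exact ⟨hstrict.orderIsoOfSurjective φ ((hcont.comp (continuous_id.max continuous_const)).mul
    continuous_id |>.surjective htop hbot), hnonneg⟩

theorem OrderIso.tendsto_symm_div_atTop_zero (Φ : ℝ ≃o ℝ)
    (hΦ : ∀ y, 0 ≤ y → Φ y = v y * y) (hpos : ∀ y, 0 < v y) (hv : Tendsto v atTop atTop) :
    Tendsto (fun z => Φ.symm z / z) atTop (𝓝 0) := by
  have hΦ0 : Φ 0 = 0 := by simpa using hΦ 0 le_rfl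
  refine (tendsto_inv_atTop_zero.comp (hv.comp Φ.symm.tendsto_atTop)).congr' ?_
  filter_upwards [eventually_gt_atTop 0] with z hz
  obtain ⟨x, rfl⟩ := Φ.surjective z
  have hx : 0 < x := by rwa [← hΦ0, Φ.lt_iff_lt] at hz
  simp only [Function.comp_apply, Φ.symm_apply_apply]
  rw [hΦ x hx.le]
  field_simp [(hpos x).ne']

end MulSelf

/-- Every nonnegative `f : [0,∞) → [0,∞)` with `f(0) = 0`,
`sup_{z>0} f(z)/z < ∞` and `limsup_{z→∞} f(z)/z = 0` admits a continuous, strictly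
increasing, sublinear majorant `F` with `F(0) = 0`, `F(z) → ∞`, whose inverse has the
representation `F⁻¹(y) = σ(√y)·y` with `σ` continuous, `y ↦ σ(√y)` monotone increasing,
bounded below by some `σ₀ > 0`, and tending to `∞`. -/
theorem stmt6 (f : ℝ → ℝ)
    (hf0 : f 0 = 0)
    (hfnn : ∀ z, 0 ≤ z → 0 ≤ f z)
    (hbdd : ∃ M : ℝ, ∀ z, 0 < z → f z / z ≤ M)
    (hsub : Filter.limsup (fun z => f z / z) atTop = 0) :
    ∃ F σ : ℝ → ℝ, ∃ σ₀ : ℝ,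
      -- F : [0,∞) → [0,∞) continuous and strictly increasing
      ContinuousOn F (Set.Ici 0) ∧ StrictMonoOn F (Set.Ici 0) ∧
      (∀ z, 0 ≤ z → 0 ≤ F z) ∧
      -- (1) F dominates f
      (∀ z, 0 ≤ z → f z ≤ F z) ∧
      -- (2) F(0) = 0 and F(z) → ∞ as z → ∞
      F 0 = 0 ∧ Tendsto F atTop atTop ∧
      -- (3) F is sublinear at infinity
      Filter.limsup (fun z => F z / z) atTop = 0 ∧
      -- σ : [0,∞) → [0,∞), and F⁻¹(y) = σ(√y)·y, i.e. F(σ(√y)·y) = y for y ≥ 0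
      ContinuousOn σ (Set.Ici 0) ∧ (∀ s, 0 ≤ s → 0 ≤ σ s) ∧
      (∀ y, 0 ≤ y → F (σ (Real.sqrt y) * y) = y) ∧
      -- (4) y ↦ σ(√y) is monotonically increasing
      MonotoneOn (fun y => σ (Real.sqrt y)) (Set.Ici 0) ∧
      -- (5) uniform positive lower bound
      0 < σ₀ ∧ (∀ y, 0 ≤ y → σ₀ ≤ σ (Real.sqrt y)) ∧
      -- (6) σ(√y) → ∞ as y → ∞
      Tendsto (fun y => σ (Real.sqrt y)) atTop atTop := by
  obtain ⟨M, hM⟩ := hbdd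
  obtain ⟨u, hu_mono, hu_top, hu_lb, hu_le⟩ := exists_monotone_tendsto_atTop_mul_le hf0 hfnn
    (by positivity : (0 : ℝ) < max M 1) (fun z hz => (hM z hz).trans (le_max_left M 1)) hsub
  obtain ⟨v, hv_cont, hv_mono, hvu, hv_lb, hv_top⟩ :=
    hu_mono.exists_continuous_monotone_le hu_top hu_lb
  have hc : (0 : ℝ) < (max M 1 + 1)⁻¹ := by positivity
  have hv_pos : ∀ y, 0 < v y := fun y => hc.trans_le (hv_lb y)
  obtain ⟨Φ, hΦ⟩ := exists_orderIso_apply_eq_mul hv_cont hv_mono hv_pos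
  have hF0 : Φ.symm 0 = 0 := Φ.symm_apply_eq.2 (by simpa using (hΦ 0 le_rfl).symm)
  have hσ : EqOn (fun y => v (√y ^ 2)) v (Ici 0) := fun y hy => by simp only [Real.sq_sqrt hy]
  refine ⟨Φ.symm, fun s => v (s ^ 2), _, Φ.symm.continuous.continuousOn,
    Φ.symm.strictMono.strictMonoOn _, fun z hz => hF0 ▸ Φ.symm.monotone hz, fun z hz => ?_, hF0,
    Φ.symm.tendsto_atTop, (Φ.tendsto_symm_div_atTop_zero hΦ hv_pos hv_top).limsup_eq,
    (hv_cont.comp (continuous_pow 2)).continuousOn, fun s _ => (hv_pos _).le,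
    fun y hy => by rw [hσ hy, ← hΦ y hy, Φ.symm_apply_apply],
    (hv_mono.monotoneOn _).congr hσ.symm, hc, fun y hy => (hσ hy).symm ▸ hv_lb y,
    hv_top.congr' (eventuallyEq_of_mem (Ici_mem_atTop 0) hσ.symm)⟩
  rw [Φ.le_symm_apply, hΦ _ (hfnn z hz)]
  exact (mul_le_mul_of_nonneg_right (hvu _) (hfnn z hz)).trans (hu_le z hz)
end

section
/- Let q : [0,∞) → [0,∞) be a bounded function with q(z) → 0 as z → ∞. Then there exists a continuous function Q : [0,∞) → (0,∞), linear on each integer interval [k, k+1] for k = 0, 1, 2, …, such that: q(z) ≤ Q(z) for all z ∈ [0,∞); Q(z) → 0 as z → ∞; Q is monotonically decreasing; and Q'(z)·z + Q(z) ≥ 0 for every z ∈ [0,∞) that is not a nonnegative integer (where Q' is the slope of the relevant linear piece). -/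
/-!
Let `s k` be the supremum of `q` on `[k, ∞)` and `u k = s (k - 1)`, so that `q z ≤ u (⌊z⌋ + 1)`;
`u` is antitone and tends to `0`. Put `c k = (m k + 1) / (k + 1)` where `m k` is the running maximum
of `(j + 1) u j` over `j ≤ k`, and let `Q` interpolate `c` linearly between consecutive integers.
Then `u ≤ c`, `c → 0` (since `m k = o(k)`), `c` is antitone and `(k + 1) c k = m k + 1` is
nondecreasing. On `[k, k + 1]` the quantity `Q' · z + Q` is affine in `z` with nonpositive slope,
so it is smallest at `z = k + 1`, where it equals `(k + 2) c (k + 1) - (k + 1) c k ≥ 0`.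
-/

open Set Filter Topology

noncomputable section

def natInterp (c : ℕ → ℝ) (z : ℝ) : ℝ :=
  c ⌊z⌋₊ + (z - ⌊z⌋₊) * (c (⌊z⌋₊ + 1) - c ⌊z⌋₊)

def tailSup (q : ℝ → ℝ) (k : ℕ) : ℝ :=
  sSup (q '' Ici (k : ℝ))

def decayMajorant (u : ℕ → ℝ) (k : ℕ) : ℝ :=
  (partialSups (fun j : ℕ => u j * (j + 1)) k + 1) / (k + 1)

end

section natInterp

variable {c : ℕ → ℝ}

theorem natInterp_eq_of_mem_Icc {k : ℕ} {z : ℝ} (hz : z ∈ Icc (k : ℝ) (k + 1)) :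
    natInterp c z = c k + (z - k) * (c (k + 1) - c k) := by
  obtain ⟨hkz, hzk⟩ := hz
  rcases hzk.lt_or_eq with hlt | rfl
  · rw [natInterp, (Nat.floor_eq_iff ((k.cast_nonneg).trans hkz)).2 ⟨hkz, hlt⟩]
  · rw [natInterp, ← Nat.cast_succ, Nat.floor_natCast]
    push_cast
    ring

theorem natInterp_natCast (k : ℕ) : natInterp c k = c k := by
  simp [natInterp]

theorem natInterp_natCast_add_one (k : ℕ) : natInterp c ((k : ℝ) + 1) = c (k + 1) := by
  rw [← Nat.cast_succ, natInterp_natCast]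

theorem locallyFinite_Icc_natCast : LocallyFinite fun k : ℕ => Icc (k : ℝ) (k + 1) := by
  intro x
  refine ⟨Iio (x + 1), Iio_mem_nhds (lt_add_one x), (finite_lt_nat ⌈x + 1⌉₊).subset ?_⟩
  rintro k ⟨z, ⟨hkz, -⟩, hzx⟩
  exact_mod_cast (hkz.trans_lt hzx).trans_le (Nat.le_ceil (x + 1))

theorem iUnion_Icc_natCast : ⋃ k : ℕ, Icc (k : ℝ) (k + 1) = Ici 0 := by
  refine Subset.antisymm (iUnion_subset fun k z hz => (k.cast_nonneg).trans hz.1) fun z hz => ?_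
  exact mem_iUnion.2 ⟨⌊z⌋₊, Nat.floor_le hz, (Nat.lt_floor_add_one z).le⟩

theorem continuousOn_natInterp (c : ℕ → ℝ) : ContinuousOn (natInterp c) (Ici 0) := by
  rw [← iUnion_Icc_natCast]
  refine locallyFinite_Icc_natCast.continuousOn_iUnion (fun _ => isClosed_Icc) fun k => ?_
  have hk : Continuous fun z : ℝ => c k + (z - k) * (c (k + 1) - c k) := by fun_prop
  exact hk.continuousOn.congr fun z hz => natInterp_eq_of_mem_Icc hz

namespace Antitone

variable (hc : Antitone c)
include hc

theorem le_natInterp (z : ℝ) : c (⌊z⌋₊ + 1) ≤ natInterp c z := by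
  have hstep := hc (Nat.le_succ ⌊z⌋₊)
  have hfract : z - ⌊z⌋₊ ≤ 1 := by linarith [Nat.lt_floor_add_one z]
  rw [natInterp]
  nlinarith

theorem natInterp_le {z : ℝ} (hz : 0 ≤ z) : natInterp c z ≤ c ⌊z⌋₊ := by
  have hstep := hc (Nat.le_succ ⌊z⌋₊)
  have hfract : 0 ≤ z - ⌊z⌋₊ := by linarith [Nat.floor_le hz]
  rw [natInterp]
  nlinarith

theorem antitoneOn_natInterp : AntitoneOn (natInterp c) (Ici 0) := by
  intro x hx y hy hxy
  rcases (Nat.floor_mono hxy).eq_or_lt with hfloor | hfloor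
  · have hstep := hc (Nat.le_succ ⌊x⌋₊)
    rw [natInterp, natInterp, ← hfloor]
    nlinarith
  · calc natInterp c y ≤ c ⌊y⌋₊ := hc.natInterp_le hy
      _ ≤ c (⌊x⌋₊ + 1) := hc hfloor
      _ ≤ natInterp c x := hc.le_natInterp x

theorem tendsto_natInterp {L : ℝ} (hL : Tendsto c atTop (𝓝 L)) :
    Tendsto (natInterp c) atTop (𝓝 L) :=
  tendsto_of_tendsto_of_tendsto_of_le_of_le'
    ((hL.comp (tendsto_add_atTop_nat 1)).comp tendsto_nat_floor_atTop)
    (hL.comp tendsto_nat_floor_atTop)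
    (.of_forall hc.le_natInterp)
    (eventually_ge_atTop 0 |>.mono fun _ hz => hc.natInterp_le hz)

theorem slope_mul_add_natInterp_nonneg (hmul : Monotone fun k : ℕ => c k * (k + 1)) {k : ℕ}
    {z : ℝ} (hz : z ∈ Ioo (k : ℝ) (k + 1)) :
    0 ≤ (c (k + 1) - c k) * z + natInterp c z := by
  have hstep : c (k + 1) - c k ≤ 0 := sub_nonpos.2 (hc (Nat.le_succ k))
  have hgrowth : c k * (k + 1) ≤ c (k + 1) * (k + 2) := by
    have := hmul (Nat.le_succ k)
    push_cast at this
    linarith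
  have hslope : (k + 2 - (2 * z - k)) * (c (k + 1) - c k) ≤ 0 :=
    mul_nonpos_of_nonneg_of_nonpos (by linarith [hz.2]) hstep
  rw [natInterp_eq_of_mem_Icc (Ioo_subset_Icc_self hz)]
  linarith

end Antitone

end natInterp

section tailSup

variable {q : ℝ → ℝ} {M : ℝ}

theorem bddAbove_image_Ici_natCast (hM : ∀ z, 0 ≤ z → q z ≤ M) (k : ℕ) :
    BddAbove (q '' Ici (k : ℝ)) :=
  ⟨M, by rintro _ ⟨z, hz, rfl⟩; exact hM z ((k.cast_nonneg).trans hz)⟩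

theorem le_tailSup (hM : ∀ z, 0 ≤ z → q z ≤ M) {k : ℕ} {z : ℝ} (hz : (k : ℝ) ≤ z) :
    q z ≤ tailSup q k :=
  le_csSup (bddAbove_image_Ici_natCast hM k) ⟨z, hz, rfl⟩

theorem tailSup_le {k : ℕ} {a : ℝ} (h : ∀ z, (k : ℝ) ≤ z → q z ≤ a) : tailSup q k ≤ a :=
  csSup_le ⟨q k, k, self_mem_Ici, rfl⟩ (by rintro _ ⟨z, hz, rfl⟩; exact h z hz)

theorem tailSup_nonneg (hM : ∀ z, 0 ≤ z → q z ≤ M) (hq : ∀ z, 0 ≤ z → 0 ≤ q z) (k : ℕ) :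
    0 ≤ tailSup q k :=
  (hq k k.cast_nonneg).trans (le_tailSup hM le_rfl)

theorem antitone_tailSup (hM : ∀ z, 0 ≤ z → q z ≤ M) : Antitone (tailSup q) :=
  fun _ _ hkl => tailSup_le fun _ hz => le_tailSup hM ((Nat.cast_le.2 hkl).trans hz)

theorem tendsto_tailSup (hM : ∀ z, 0 ≤ z → q z ≤ M) (hq : Tendsto q atTop (𝓝 0)) :
    Tendsto (tailSup q) atTop (𝓝 0) := by
  refine tendsto_order.2 ⟨fun a ha => ?_, fun a ha => ?_⟩
  · filter_upwards [(hq.comp tendsto_natCast_atTop_atTop).eventually (lt_mem_nhds ha)] with k hk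
    exact hk.trans_le (le_tailSup hM le_rfl)
  · obtain ⟨Z, hZ⟩ := eventually_atTop.1 (hq.eventually (ge_mem_nhds (half_pos ha)))
    filter_upwards [eventually_ge_atTop ⌈Z⌉₊] with k hk
    refine (tailSup_le fun z hz => hZ z ?_).trans_lt (half_lt_self ha)
    exact (Nat.le_ceil Z).trans ((Nat.cast_le.2 hk).trans hz)

end tailSup

section decayMajorant

variable {u : ℕ → ℝ}

local notation "runMax" u => partialSups fun j : ℕ => u j * ((j : ℝ) + 1)

theorem decayMajorant_mul (u : ℕ → ℝ) (k : ℕ) :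
    decayMajorant u k * (k + 1) = (runMax u) k + 1 :=
  div_mul_cancel₀ _ (by positivity)

theorem monotone_decayMajorant_mul (u : ℕ → ℝ) :
    Monotone fun k : ℕ => decayMajorant u k * (k + 1) := by
  simp_rw [decayMajorant_mul]
  exact fun _ _ hkl => add_le_add_left ((partialSups _).monotone hkl) 1

theorem le_decayMajorant (u : ℕ → ℝ) (k : ℕ) : u k ≤ decayMajorant u k := by
  rw [decayMajorant, le_div_iff₀ (by positivity)]
  linarith [le_partialSups (fun j : ℕ => u j * ((j : ℝ) + 1)) k]

theorem runMax_nonneg (hu : 0 ≤ u) (k : ℕ) : 0 ≤ (runMax u) k :=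
  (mul_nonneg (hu 0) (by positivity)).trans
    (le_partialSups_of_le (fun j : ℕ => u j * ((j : ℝ) + 1)) k.zero_le)

theorem decayMajorant_pos (hu : 0 ≤ u) (k : ℕ) : 0 < decayMajorant u k := by
  have := runMax_nonneg hu k
  rw [decayMajorant]
  positivity

theorem runMax_le_add_mul (hu : 0 ≤ u) {N : ℕ} {ε : ℝ} (hε : 0 ≤ ε)
    (hN : ∀ j, N ≤ j → u j ≤ ε) (k : ℕ) : (runMax u) k ≤ (runMax u) N + ε * (k + 1) := by
  have hεk : 0 ≤ ε * (k + 1) := by positivity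
  refine partialSups_le _ k _ fun j hjk => ?_
  rcases le_total j N with hjN | hNj
  · linarith [le_partialSups_of_le (fun j : ℕ => u j * ((j : ℝ) + 1)) hjN]
  · have hjk' : (j : ℝ) + 1 ≤ k + 1 := by exact_mod_cast Nat.succ_le_succ hjk
    nlinarith [hN j hNj, hu j, runMax_nonneg hu N]

theorem antitone_decayMajorant (hu : 0 ≤ u) (hanti : Antitone u) :
    Antitone (decayMajorant u) := by
  refine antitone_nat_of_succ_le fun k => ?_
  have hm := runMax_nonneg hu k
  have hstep : u (k + 1) * ((k : ℝ) + 1) ≤ (runMax u) k :=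
    (mul_le_mul_of_nonneg_right (hanti k.le_succ) (by positivity)).trans
      (le_partialSups (fun j : ℕ => u j * ((j : ℝ) + 1)) k)
  have hsucc := partialSups_succ (fun j : ℕ => u j * ((j : ℝ) + 1)) k
  rw [Order.succ_eq_add_one] at hsucc
  rw [decayMajorant, decayMajorant, div_le_div_iff₀ (by positivity) (by positivity), hsucc]
  push_cast
  rcases max_cases ((runMax u) k) (u (k + 1) * ((k : ℝ) + 1 + 1)) with ⟨hmax, -⟩ | ⟨hmax, -⟩ <;>
    rw [hmax] <;> nlinarith

theorem tendsto_decayMajorant (hu : 0 ≤ u) (hlim : Tendsto u atTop (𝓝 0)) :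
    Tendsto (decayMajorant u) atTop (𝓝 0) := by
  refine tendsto_order.2 ⟨fun a ha => .of_forall fun k => ha.trans (decayMajorant_pos hu k),
    fun a ha => ?_⟩
  obtain ⟨N, hN⟩ := eventually_atTop.1 (hlim.eventually (ge_mem_nhds (half_pos ha)))
  have hdecay : Tendsto (fun k : ℕ => ((runMax u) N + 1) / ((k : ℝ) + 1)) atTop (𝓝 0) :=
    tendsto_const_nhds.div_atTop (tendsto_atTop_add_const_right _ 1 tendsto_natCast_atTop_atTop)
  filter_upwards [hdecay.eventually (gt_mem_nhds (half_pos ha))] with k hk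
  have hbound : decayMajorant u k ≤ ((runMax u) N + 1) / ((k : ℝ) + 1) + a / 2 := by
    rw [decayMajorant, div_add' _ _ _ (by positivity), div_le_div_iff_of_pos_right (by positivity)]
    linarith [runMax_le_add_mul hu (half_pos ha).le hN k]
  linarith

end decayMajorant

/-- For every bounded `q : [0,∞) → [0,∞)` with `q(z) → 0` as `z → ∞`
there exists a continuous majorant `Q > 0`, affine on each integer interval `[k,k+1]`,
monotonically decreasing, with `Q(z) → 0` as `z → ∞`, and whose piecewise slopes satisfy
`Q'(z)·z + Q(z) ≥ 0` at every non-integer `z ≥ 0`. -/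
theorem stmt7 (q : ℝ → ℝ)
    (hqnn : ∀ z, 0 ≤ z → 0 ≤ q z)
    (hqbdd : ∃ M : ℝ, ∀ z, 0 ≤ z → q z ≤ M)
    (hqlim : Tendsto q atTop (𝓝 0)) :
    ∃ Q : ℝ → ℝ,
      ContinuousOn Q (Set.Ici 0) ∧
      -- Q is affine on each integer interval [k, k+1]
      (∀ k : ℕ, ∀ z ∈ Set.Icc (k : ℝ) ((k : ℝ) + 1),
        Q z = Q (k : ℝ) + (z - (k : ℝ)) * (Q ((k : ℝ) + 1) - Q (k : ℝ))) ∧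
      -- Q is (strictly) positive
      (∀ z, 0 ≤ z → 0 < Q z) ∧
      -- Q dominates q
      (∀ z, 0 ≤ z → q z ≤ Q z) ∧
      -- Q(z) → 0 as z → ∞
      Tendsto Q atTop (𝓝 0) ∧
      -- Q is monotonically decreasing
      AntitoneOn Q (Set.Ici 0) ∧
      -- Q'(z)·z + Q(z) ≥ 0 at non-integer points (Q' = slope of the linear piece)
      (∀ k : ℕ, ∀ z ∈ Set.Ioo (k : ℝ) ((k : ℝ) + 1),
        0 ≤ (Q ((k : ℝ) + 1) - Q (k : ℝ)) * z + Q z) := by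
  obtain ⟨M, hM⟩ := hqbdd
  set u : ℕ → ℝ := fun k => tailSup q (k - 1)
  have hu_nonneg : 0 ≤ u := fun k => tailSup_nonneg hM hqnn (k - 1)
  have hu_anti : Antitone u :=
    (antitone_tailSup hM).comp_monotone fun _ _ hkl => Nat.sub_le_sub_right hkl 1
  have hu_lim : Tendsto u atTop (𝓝 0) := (tendsto_tailSup hM hqlim).comp (tendsto_sub_atTop_nat 1)
  have hc := antitone_decayMajorant hu_nonneg hu_anti
  refine ⟨natInterp (decayMajorant u), continuousOn_natInterp _, fun k z hz => ?_,
    fun z _ => (decayMajorant_pos hu_nonneg _).trans_le (hc.le_natInterp z), fun z hz => ?_,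
    hc.tendsto_natInterp (tendsto_decayMajorant hu_nonneg hu_lim), hc.antitoneOn_natInterp,
    fun k z hz => ?_⟩
  · rw [natInterp_eq_of_mem_Icc hz, natInterp_natCast, natInterp_natCast_add_one]
  · calc q z ≤ u (⌊z⌋₊ + 1) := le_tailSup hM (Nat.floor_le hz)
      _ ≤ decayMajorant u (⌊z⌋₊ + 1) := le_decayMajorant u _
      _ ≤ natInterp (decayMajorant u) z := hc.le_natInterp z
  · rw [natInterp_natCast, natInterp_natCast_add_one]
    exact hc.slope_mul_add_natInterp_nonneg (monotone_decayMajorant_mul u) hz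
end

section
/- Given a sequence of real numbers (q_k)_{k∈ℕ₀}, let I(z) := q_k + (z − k)(q_{k+1} − q_k) for z ∈ [k, k+1), k = 0, 1, 2, …, be its piecewise-linear interpolant. If the sequence (q_k) is positive, monotonically decreasing, and satisfies q_{k+1} ≥ q_k / (1 + 1/(k+1)) for all k = 0, 1, 2, …, then I'(z)·z + I(z) ≥ 0 for every z ∈ [0,∞) that is not a nonnegative integer (where I'(z) = q_{k+1} − q_k is the slope on (k, k+1)). -/
/-! On `(k, k+1)` the quantity `I'(z) z + I(z) = q_k + (q_{k+1} - q_k)(2z - k)` is affine in `z`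
with nonpositive slope, so it is smallest at the right endpoint `z = k + 1`, where it equals
`(k+2) q_{k+1} - (k+1) q_k`; the ratio condition says precisely that this is nonnegative. -/

open Set

/-- The piecewise-linear interpolant of a sequence `(q_k)` at integer points:
`I(z) = q_k + (z − k)(q_{k+1} − q_k)` for `z ∈ [k, k+1)`. -/
noncomputable def interpolant (q : ℕ → ℝ) (z : ℝ) : ℝ :=
  q ⌊z⌋₊ + (z - ⌊z⌋₊) * (q (⌊z⌋₊ + 1) - q ⌊z⌋₊)

theorem interpolant_eq_of_mem_Ico (q : ℕ → ℝ) {k : ℕ} {z : ℝ} (hz : z ∈ Ico (k : ℝ) (k + 1)) :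
    interpolant q z = q k + (z - k) * (q (k + 1) - q k) := by
  have hfloor : ⌊z⌋₊ = k := (Nat.floor_eq_iff ((Nat.cast_nonneg k).trans hz.1)).mpr hz
  rw [interpolant, hfloor]

theorem mul_le_mul_succ_of_div_le {a b : ℝ} {k : ℕ} (h : a / (1 + 1 / ((k : ℝ) + 1)) ≤ b) :
    a * (k + 1) ≤ b * (k + 2) := by
  have hfactor : 1 + 1 / ((k : ℝ) + 1) = (k + 2) / (k + 1) := by field_simp; ring
  rwa [hfactor, div_div_eq_mul_div, div_le_iff₀ (by positivity)] at h

theorem stmt8_general (q : ℕ → ℝ)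
    (hdec : ∀ k, q (k + 1) ≤ q k)
    (hratio : ∀ k : ℕ, q k / (1 + 1 / ((k : ℝ) + 1)) ≤ q (k + 1)) :
    ∀ (k : ℕ) (z : ℝ), z ∈ Set.Ioo (k : ℝ) ((k : ℝ) + 1) →
      0 ≤ (q (k + 1) - q k) * z + interpolant q z := by
  intro k z hz
  have hslope : q (k + 1) - q k ≤ 0 := sub_nonpos.mpr (hdec k)
  have hendpoint := mul_le_mul_succ_of_div_le (hratio k)
  rw [interpolant_eq_of_mem_Ico q (Ioo_subset_Ico_self hz)]
  calc (0 : ℝ) ≤ q k + (q (k + 1) - q k) * (k + 2) := by linarith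
    _ ≤ q k + (q (k + 1) - q k) * (2 * z - k) := by
        gcongr _ + ?_
        exact mul_le_mul_of_nonpos_left (by linarith [hz.2]) hslope
    _ = (q (k + 1) - q k) * z + (q k + (z - k) * (q (k + 1) - q k)) := by ring

/-- If `(q_k)` is positive, monotonically decreasing and satisfies
`q_{k+1} ≥ q_k/(1 + 1/(k+1))`, then its piecewise-linear interpolant `I` satisfies
`I'(z)·z + I(z) ≥ 0` for every non-integer `z ≥ 0`, where `I'(z) = q_{k+1} − q_k` is the
slope on `(k, k+1)`. -/
theorem stmt8 (q : ℕ → ℝ)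
    (hpos : ∀ k, 0 < q k)
    (hdec : ∀ k, q (k + 1) ≤ q k)
    (hratio : ∀ k : ℕ, q k / (1 + 1 / ((k : ℝ) + 1)) ≤ q (k + 1)) :
    ∀ (k : ℕ) (z : ℝ), z ∈ Set.Ioo (k : ℝ) ((k : ℝ) + 1) →
      0 ≤ (q (k + 1) - q k) * z + interpolant q z :=
  stmt8_general q hdec hratio
end

section
/- Let T > 0, ū ∈ L²(𝕋²;ℝ²), and let u ∈ L²(0,T;L²(𝕋²;ℝ²)) satisfy ‖u(t)‖_{L²(𝕋²)} = ‖ū‖_{L²(𝕋²)} for almost every t ∈ [0,T]. Suppose (u_k)_{k∈ℕ} is a sequence of continuous maps [0,T] → L²(𝕋²;ℝ²) such that for each k the function t ↦ ‖u_k(t)‖_{L²(𝕋²)} is non-increasing on [0,T], u_k(0) → ū strongly in L²(𝕋²;ℝ²), and u_k converges to u weakly in L²(0,T;L²(𝕋²;ℝ²)). Then u_k → u strongly in L²(0,T;L²(𝕋²;ℝ²)). -/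
open MeasureTheory Real Set Filter Topology

noncomputable section

/-- Points of `ℝ²`. The flat torus `𝕋² = ℝ²/(2πℤ)²` is realized via `(2πℤ)²`-periodic
functions on `ℝ²`, with integrals taken over the fundamental domain `Q2 = [0,2π)²`. -/
abbrev V : Type := Fin 2 → ℝ

/-- Squared Euclidean norm on `ℝ²`. -/
def sqnorm (v : V) : ℝ := v 0 ^ 2 + v 1 ^ 2

/-- Euclidean dot product on `ℝ²`. -/
def dot (a b : V) : ℝ := a 0 * b 0 + a 1 * b 1

/-- Open Euclidean ball of radius `r` centered at `0` in `ℝ²`. -/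
def ball2 (r : ℝ) : Set V := {h : V | sqnorm h < r ^ 2}

/-- Fundamental domain `[0,2π)²` of the torus `ℝ²/(2πℤ)²`. -/
def Q2 : Set V := Set.univ.pi fun _ => Set.Ico (0 : ℝ) (2 * π)

/-- `(2πℤ)²`-periodicity: a function on `ℝ²` descends to the torus. -/
def Periodic2 {α : Type*} (f : V → α) : Prop :=
  ∀ (x : V) (n : Fin 2 → ℤ), f (fun i => x i + 2 * π * (n i : ℝ)) = f x

/-- Squared `L²(𝕋²)` norm of a vector field. -/
def l2sq (f : V → V) : ℝ := ∫ x in Q2, sqnorm (f x)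

/-- Squared `L²(𝕋²)` norm of a scalar function. -/
def l2sqS (f : V → ℝ) : ℝ := ∫ x in Q2, (f x) ^ 2

/-- Membership in `L²(𝕋²;ℝ²)`. -/
def MemL2x (f : V → V) : Prop :=
  AEMeasurable f (volume.restrict Q2) ∧
    Integrable (fun x => sqnorm (f x)) (volume.restrict Q2)

/-- The measure on `(0,T] × 𝕋²` underlying the Bochner space `L²(0,T;L²(𝕋²))`. -/
def μT (T : ℝ) : Measure (ℝ × V) :=
  (volume.restrict (Set.Ioc (0 : ℝ) T)).prod (volume.restrict Q2)

/-- Membership in `L²(0,T;L²(𝕋²;ℝ²))`. -/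
def MemL2T (T : ℝ) (u : ℝ → V → V) : Prop :=
  Measurable (fun q : ℝ × V => u q.1 q.2) ∧
    Integrable (fun q : ℝ × V => sqnorm (u q.1 q.2)) (μT T)

/-- Inner product of the Hilbert space `L²(0,T;L²(𝕋²;ℝ²))`. -/
def pairT (T : ℝ) (u v : ℝ → V → V) : ℝ :=
  ∫ q, dot (u q.1 q.2) (v q.1 q.2) ∂(μT T)

/-- Distance in `L²(0,T;L²(𝕋²;ℝ²))`. -/
def distL2T (T : ℝ) (u v : ℝ → V → V) : ℝ :=
  Real.sqrt (∫ q, sqnorm (u q.1 q.2 - v q.1 q.2) ∂(μT T))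

/-- A modulus of continuity: a nonnegative function `φ` with `φ(r) → 0` as `r → 0⁺`. -/
def Modulus (φ : ℝ → ℝ) : Prop :=
  (∀ r, 0 ≤ φ r) ∧ Tendsto φ (𝓝[>] (0 : ℝ)) (𝓝 0)

/-!
Expand `‖u_k - u‖² = ‖u_k‖² - 2⟨u_k, u⟩ + ‖u‖²` in `L²(0,T;L²)`. Energy conservation gives
`‖u‖² = T‖ū‖²`, and weak convergence gives `⟨u_k, u⟩ → ⟨u, u⟩ = T‖ū‖²`. Monotonicity of the
energy bounds `‖u_k‖² ≤ T‖u_k(0)‖²`, and strong convergence of the initial data gives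
`‖u_k(0)‖² → ‖ū‖²`. Hence `limsup ‖u_k - u‖² ≤ T‖ū‖² - 2T‖ū‖² + T‖ū‖² = 0`.
-/

lemma sqnorm_nonneg (v : V) : 0 ≤ sqnorm v := by
  unfold sqnorm; positivity

lemma dot_self (v : V) : dot v v = sqnorm v := by
  simp only [dot, sqnorm]; ring

lemma sqnorm_sub_comm (a b : V) : sqnorm (a - b) = sqnorm (b - a) := by
  simp only [sqnorm, Pi.sub_apply]; ring

lemma sqnorm_sub (a b : V) : sqnorm (a - b) = sqnorm a - 2 * dot a b + sqnorm b := by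
  simp only [sqnorm, dot, Pi.sub_apply]; ring

lemma abs_dot_le (a b : V) : |dot a b| ≤ (sqnorm a + sqnorm b) / 2 := by
  simp only [dot, sqnorm]
  rw [abs_le]
  constructor <;> nlinarith [sq_nonneg (a 0 + b 0), sq_nonneg (a 1 + b 1),
    sq_nonneg (a 0 - b 0), sq_nonneg (a 1 - b 1)]

lemma sqnorm_sub_le (a b : V) : sqnorm (a - b) ≤ 2 * sqnorm a + 2 * sqnorm b := by
  simp only [sqnorm, Pi.sub_apply]
  nlinarith [sq_nonneg (a 0 + b 0), sq_nonneg (a 1 + b 1)]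

lemma sqnorm_le_young {δ : ℝ} (hδ : 0 < δ) (a b : V) :
    sqnorm a ≤ (1 + δ) * sqnorm b + (1 + δ⁻¹) * sqnorm (a - b) := by
  simp only [sqnorm, Pi.sub_apply]
  have hδδ : δ * δ⁻¹ = 1 := mul_inv_cancel₀ hδ.ne'
  nlinarith [sq_nonneg (δ * b 0 - (a 0 - b 0)), sq_nonneg (δ * b 1 - (a 1 - b 1)),
    mul_pos hδ hδ, sq_nonneg (a 0 - b 0), sq_nonneg (a 1 - b 1)]

lemma continuous_sqnorm : Continuous sqnorm := by
  unfold sqnorm; fun_prop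

lemma continuous_dot : Continuous fun p : V × V => dot p.1 p.2 := by
  unfold dot; fun_prop

lemma exists_pos_one_add_mul_lt {a b : ℝ} (h : a < b) : ∃ δ > 0, (1 + δ) * a < b := by
  have hlim : Tendsto (fun δ : ℝ => (1 + δ) * a) (𝓝[>] 0) (𝓝 a) :=
    tendsto_nhdsWithin_of_tendsto_nhds <|
      (by fun_prop : Continuous fun δ : ℝ => (1 + δ) * a).tendsto' 0 a (by simp)
  obtain ⟨δ, hδa, hδ⟩ := ((hlim.eventually (gt_mem_nhds h)).and self_mem_nhdsWithin).exists
  exact ⟨δ, hδ, hδa⟩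

lemma tendsto_of_young_bounds {ι : Type*} {l : Filter ι} {c d : ι → ℝ} {L : ℝ}
    (hd : Tendsto d l (𝓝 0))
    (hle : ∀ δ > 0, ∀ i, c i ≤ (1 + δ) * L + (1 + δ⁻¹) * d i)
    (hge : ∀ δ > 0, ∀ i, L ≤ (1 + δ) * c i + (1 + δ⁻¹) * d i) :
    Tendsto c l (𝓝 L) := by
  have small (δ ε : ℝ) (hε : 0 < ε) : ∀ᶠ i in l, (1 + δ⁻¹) * d i < ε := by
    have hdδ := hd.const_mul (1 + δ⁻¹)
    rw [mul_zero] at hdδ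
    exact hdδ.eventually (gt_mem_nhds hε)
  refine tendsto_order.2 ⟨fun a ha => ?_, fun a ha => ?_⟩
  · obtain ⟨δ, hδ, hδa⟩ := exists_pos_one_add_mul_lt ha
    filter_upwards [small δ _ (sub_pos.2 hδa)] with i hi
    nlinarith [hge δ hδ i]
  · obtain ⟨δ, hδ, hδa⟩ := exists_pos_one_add_mul_lt ha
    filter_upwards [small δ _ (sub_pos.2 hδa)] with i hi
    linarith [hle δ hδ i]

lemma l2sq_nonneg (f : V → V) : 0 ≤ l2sq f :=
  integral_nonneg fun _ => sqnorm_nonneg _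

lemma l2sq_sub_comm (f g : V → V) : l2sq (f - g) = l2sq (g - f) := by
  simp only [l2sq, Pi.sub_apply, sqnorm_sub_comm (f _)]

lemma MemL2x.sub {f g : V → V} (hf : MemL2x f) (hg : MemL2x g) : MemL2x (f - g) := by
  refine ⟨hf.1.sub hg.1, ((hf.2.const_mul 2).add (hg.2.const_mul 2)).mono'
    (continuous_sqnorm.measurable.comp_aemeasurable (hf.1.sub hg.1)).aestronglyMeasurable ?_⟩
  filter_upwards with x
  rw [Real.norm_of_nonneg (sqnorm_nonneg _)]
  exact sqnorm_sub_le _ _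

lemma l2sq_le_young {δ : ℝ} (hδ : 0 < δ) {f g : V → V} (hf : MemL2x f) (hg : MemL2x g) :
    l2sq f ≤ (1 + δ) * l2sq g + (1 + δ⁻¹) * l2sq (f - g) := by
  have hfg := (hf.sub hg).2
  calc l2sq f
      ≤ ∫ x in Q2, (1 + δ) * sqnorm (g x) + (1 + δ⁻¹) * sqnorm ((f - g) x) :=
        integral_mono hf.2 ((hg.2.const_mul _).add (hfg.const_mul _))
          fun x => sqnorm_le_young hδ (f x) (g x)
    _ = (1 + δ) * l2sq g + (1 + δ⁻¹) * l2sq (f - g) := by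
        rw [integral_add (hg.2.const_mul _) (hfg.const_mul _), integral_const_mul,
          integral_const_mul]
        rfl

lemma tendsto_l2sq_of_tendsto_l2sq_sub {ι : Type*} {l : Filter ι} {f : ι → V → V} {g : V → V}
    (hf : ∀ i, MemL2x (f i)) (hg : MemL2x g) (h : Tendsto (fun i => l2sq (f i - g)) l (𝓝 0)) :
    Tendsto (fun i => l2sq (f i)) l (𝓝 (l2sq g)) :=
  tendsto_of_young_bounds h (fun _ hδ i => l2sq_le_young hδ (hf i) hg)
    fun _ hδ i => l2sq_sub_comm (f i) g ▸ l2sq_le_young hδ hg (hf i)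

section SpaceTime

variable {T : ℝ} {v w : ℝ → V → V}

lemma MemL2T.integrable_dot (hv : MemL2T T v) (hw : MemL2T T w) :
    Integrable (fun q : ℝ × V => dot (v q.1 q.2) (w q.1 q.2)) (μT T) := by
  refine ((hv.2.add hw.2).div_const 2).mono'
    (continuous_dot.measurable.comp (hv.1.prodMk hw.1)).aestronglyMeasurable ?_
  filter_upwards with q
  exact abs_dot_le _ _

lemma pairT_self (v : ℝ → V → V) : pairT T v v = ∫ q, sqnorm (v q.1 q.2) ∂(μT T) := by
  simp only [pairT, dot_self]

lemma integral_sqnorm_sub (hv : MemL2T T v) (hw : MemL2T T w) :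
    ∫ q, sqnorm (v q.1 q.2 - w q.1 q.2) ∂(μT T) =
      ∫ q, sqnorm (v q.1 q.2) ∂(μT T) - 2 * pairT T v w + ∫ q, sqnorm (w q.1 q.2) ∂(μT T) := by
  have hdot := (hv.integrable_dot hw).const_mul 2
  simp only [sqnorm_sub]
  rw [integral_add (hv.2.sub' hdot) hw.2, integral_sub hv.2 hdot, integral_const_mul]
  rfl

lemma integral_sqnorm_eq_setIntegral_l2sq (hv : MemL2T T v) :
    ∫ q, sqnorm (v q.1 q.2) ∂(μT T) = ∫ t in Ioc 0 T, l2sq (v t) :=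
  integral_prod _ hv.2

lemma integral_sqnorm_of_ae_l2sq_eq (hT : 0 ≤ T) (hv : MemL2T T v) {E : ℝ}
    (h : ∀ᵐ t ∂(volume.restrict (Ioc 0 T)), l2sq (v t) = E) :
    ∫ q, sqnorm (v q.1 q.2) ∂(μT T) = T * E := by
  rw [integral_sqnorm_eq_setIntegral_l2sq hv, integral_congr_ae h, setIntegral_const,
    Real.volume_real_Ioc_of_le hT, sub_zero, smul_eq_mul]

lemma integral_sqnorm_le_of_antitoneOn (hT : 0 ≤ T) (hv : MemL2T T v)
    (hmono : AntitoneOn (fun t => l2sq (v t)) (Icc 0 T)) :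
    ∫ q, sqnorm (v q.1 q.2) ∂(μT T) ≤ T * l2sq (v 0) := by
  rw [integral_sqnorm_eq_setIntegral_l2sq hv]
  calc ∫ t in Ioc 0 T, l2sq (v t)
      ≤ ∫ _ in Ioc 0 T, l2sq (v 0) :=
        setIntegral_mono_on hv.2.integral_prod_left (integrableOn_const measure_Ioc_lt_top.ne)
          measurableSet_Ioc fun t ht => hmono ⟨le_rfl, hT⟩ (Ioc_subset_Icc_self ht) ht.1.le
    _ = T * l2sq (v 0) := by
        rw [setIntegral_const, Real.volume_real_Ioc_of_le hT, sub_zero, smul_eq_mul]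

end SpaceTime

theorem stmt9_general (T : ℝ) (hT : 0 < T) (ubar : V → V) (hubar : MemL2x ubar)
    (u : ℝ → V → V) (hu : MemL2T T u)
    (henergy : ∀ᵐ t ∂(volume.restrict (Set.Ioc (0 : ℝ) T)), l2sq (u t) = l2sq ubar)
    (uk : ℕ → ℝ → V → V)
    (hmem : ∀ k, MemL2T T (uk k))
    (hmemx : ∀ k, ∀ t ∈ Set.Icc (0 : ℝ) T, MemL2x (uk k t))
    -- `t ↦ ‖u_k(t)‖_{L²}` is non-increasing on `[0,T]`
    (hmono : ∀ k, ∀ s ∈ Set.Icc (0 : ℝ) T, ∀ t ∈ Set.Icc (0 : ℝ) T,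
      s ≤ t → l2sq (uk k t) ≤ l2sq (uk k s))
    -- `u_k(0) → ū` strongly in `L²(𝕋²;ℝ²)`
    (hinit : Tendsto (fun k => l2sq fun x => uk k 0 x - ubar x) atTop (𝓝 0))
    -- `u_k ⇀ u` weakly in `L²(0,T;L²(𝕋²;ℝ²))`
    (hweak : ∀ v : ℝ → V → V, MemL2T T v →
      Tendsto (fun k => pairT T (uk k) v) atTop (𝓝 (pairT T u v))) :
    Tendsto (fun k => ∫ q, sqnorm (uk k q.1 q.2 - u q.1 q.2) ∂(μT T)) atTop (𝓝 0) := by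
  set L := l2sq ubar
  have hnorm_u : ∫ q, sqnorm (u q.1 q.2) ∂(μT T) = T * L :=
    integral_sqnorm_of_ae_l2sq_eq hT.le hu henergy
  have hinit_norm : Tendsto (fun k => l2sq (uk k 0)) atTop (𝓝 L) :=
    tendsto_l2sq_of_tendsto_l2sq_sub (fun k => hmemx k 0 ⟨le_rfl, hT.le⟩) hubar hinit
  have hcross : Tendsto (fun k => pairT T (uk k) u) atTop (𝓝 (T * L)) := by
    simpa only [pairT_self, hnorm_u] using hweak u hu
  have hbound : ∀ k, ∫ q, sqnorm (uk k q.1 q.2 - u q.1 q.2) ∂(μT T) ≤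
      T * l2sq (uk k 0) - 2 * pairT T (uk k) u + T * L := fun k => by
    rw [integral_sqnorm_sub (hmem k) hu, hnorm_u]
    linarith [integral_sqnorm_le_of_antitoneOn hT.le (hmem k) (hmono k)]
  have hlim : Tendsto (fun k => T * l2sq (uk k 0) - 2 * pairT T (uk k) u + T * L)
      atTop (𝓝 0) := by
    convert ((hinit_norm.const_mul T).sub (hcross.const_mul 2)).add_const (T * L) using 2
    ring
  exact tendsto_of_tendsto_of_tendsto_of_le_of_le tendsto_const_nhds hlim
    (fun k => integral_nonneg fun _ => sqnorm_nonneg _) hbound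

/-- If `u ∈ L²(0,T;L²(𝕋²;ℝ²))` has `‖u(t)‖_{L²} = ‖ū‖_{L²}` for a.e. `t`,
and `(u_k)` is a sequence of continuous maps `[0,T] → L²(𝕋²;ℝ²)` with `t ↦ ‖u_k(t)‖_{L²}`
non-increasing, `u_k(0) → ū` strongly in `L²` and `u_k ⇀ u` weakly in `L²(0,T;L²)`, then
`u_k → u` strongly in `L²(0,T;L²)`. -/
theorem stmt9 (T : ℝ) (hT : 0 < T) (ubar : V → V) (hubar : MemL2x ubar)
    (u : ℝ → V → V) (hu : MemL2T T u)
    (henergy : ∀ᵐ t ∂(volume.restrict (Set.Ioc (0 : ℝ) T)), l2sq (u t) = l2sq ubar)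
    (uk : ℕ → ℝ → V → V)
    (hmem : ∀ k, MemL2T T (uk k))
    (hmemx : ∀ k, ∀ t ∈ Set.Icc (0 : ℝ) T, MemL2x (uk k t))
    -- each `u_k` is continuous as a map `[0,T] → L²(𝕋²;ℝ²)`
    (hcont : ∀ k, ∀ s ∈ Set.Icc (0 : ℝ) T,
      Tendsto (fun t => l2sq fun x => uk k t x - uk k s x)
        (𝓝[Set.Icc (0 : ℝ) T] s) (𝓝 0))
    -- `t ↦ ‖u_k(t)‖_{L²}` is non-increasing on `[0,T]`
    (hmono : ∀ k, ∀ s ∈ Set.Icc (0 : ℝ) T, ∀ t ∈ Set.Icc (0 : ℝ) T,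
      s ≤ t → l2sq (uk k t) ≤ l2sq (uk k s))
    -- `u_k(0) → ū` strongly in `L²(𝕋²;ℝ²)`
    (hinit : Tendsto (fun k => l2sq fun x => uk k 0 x - ubar x) atTop (𝓝 0))
    -- `u_k ⇀ u` weakly in `L²(0,T;L²(𝕋²;ℝ²))`
    (hweak : ∀ v : ℝ → V → V, MemL2T T v →
      Tendsto (fun k => pairT T (uk k) v) atTop (𝓝 (pairT T u v))) :
    Tendsto (fun k => ∫ q, sqnorm (uk k q.1 q.2 - u q.1 q.2) ∂(μT T)) atTop (𝓝 0) :=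
  stmt9_general T hT ubar hubar u hu henergy uk hmem hmemx hmono hinit hweak
end
end

section
/- For every k ∈ ℤ² with k ≠ 0 and every r > 0, the ball average ⨍_{B_r(0)} |e^{i k·h} − 1|² dh equals (4/(|k|r)²) ∫₀^{|k|r} x (1 − J₀(x)) dx, where J₀(x) := (1/2π) ∫₀^{2π} cos(x cos θ) dθ and |k| is the Euclidean norm of k. -/
/-!
In polar coordinates `h = ρ (cos θ, sin θ)` the phase is `k·h = |k| ρ cos (θ - φ)` with
`φ = arg (k₀ + i k₁)`, and `|e^{it} - 1|² = 2 - 2 cos t`. Integrating over a full period in `θ`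
removes the shift `φ`, so the angular integral is `4π (1 - J₀(|k| ρ))`; the substitution
`x = |k| ρ` then turns the radial integral `∫₀^r ρ (1 - J₀(|k| ρ)) dρ` into the stated one.
-/

open MeasureTheory Real Set Filter Topology

noncomputable section

/-- The Bessel function of the first kind of order zero,
`J₀(x) = (1/2π) ∫₀^{2π} cos(x cos θ) dθ`. -/
def J0 (x : ℝ) : ℝ := (2 * π)⁻¹ * ∫ θ in (0 : ℝ)..(2 * π), Real.cos (x * Real.cos θ)

lemma sq_norm_exp_I_mul_ofReal_sub_one (t : ℝ) :
    ‖Complex.exp (Complex.I * t) - 1‖ ^ 2 = 2 - 2 * cos t := by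
  have h := cos_two_mul (t / 2)
  rw [mul_div_cancel₀ t two_ne_zero] at h
  rw [Complex.norm_exp_I_mul_ofReal_sub_one, Real.norm_eq_abs, sq_abs, h]
  nlinarith [sin_sq_add_cos_sq (t / 2)]

lemma polarCoord_target_inter_symm_preimage_disc {r : ℝ} (hr : 0 ≤ r) :
    polarCoord.target ∩ polarCoord.symm ⁻¹' {p : ℝ × ℝ | p.1 ^ 2 + p.2 ^ 2 < r ^ 2} =
      Ioo 0 r ×ˢ Ioo (-π) π := by
  ext ⟨ρ, θ⟩
  have hρ : (ρ * cos θ) ^ 2 + (ρ * sin θ) ^ 2 = ρ ^ 2 := by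
    nlinarith [sin_sq_add_cos_sq θ]
  simp only [polarCoord_target, polarCoord_symm_apply, mem_inter_iff, mem_prod, mem_Ioi,
    mem_Ioo, mem_preimage, mem_ofPred_eq, hρ]
  constructor
  · rintro ⟨⟨hρ0, hθ⟩, hρr⟩
    exact ⟨⟨hρ0, by nlinarith⟩, hθ⟩
  · rintro ⟨⟨hρ0, hρr⟩, hθ⟩
    exact ⟨⟨hρ0, hθ⟩, by nlinarith⟩

theorem setIntegral_ball2_eq_polar {E : Type*} [NormedAddCommGroup E] [NormedSpace ℝ E]
    {r : ℝ} (hr : 0 ≤ r) (f : V → E) :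
    ∫ h in ball2 r, f h =
      ∫ q in Ioo 0 r ×ˢ Ioo (-π) π, q.1 • f ![q.1 * cos q.2, q.1 * sin q.2] := by
  set D : Set (ℝ × ℝ) := {p | p.1 ^ 2 + p.2 ^ 2 < r ^ 2}
  have hD : MeasurableSet D := (isOpen_lt (by fun_prop) continuous_const).measurableSet
  have hball : ball2 r = MeasurableEquiv.finTwoArrow ⁻¹' D := by
    ext h; simp [ball2, sqnorm, D, MeasurableEquiv.finTwoArrow]
  have hsymm : ∀ p : ℝ × ℝ, MeasurableEquiv.finTwoArrow.symm p = ![p.1, p.2] := by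
    intro p; ext i; fin_cases i <;> rfl
  calc ∫ h in ball2 r, f h
      = ∫ p in D, f (MeasurableEquiv.finTwoArrow.symm p) := by
        rw [hball, ← (volume_preserving_finTwoArrow ℝ).setIntegral_preimage_emb
          (MeasurableEquiv.measurableEmbedding _)]
        simp only [MeasurableEquiv.symm_apply_apply]
    _ = ∫ q in polarCoord.target, q.1 • D.indicator (f ∘ MeasurableEquiv.finTwoArrow.symm)
          (polarCoord.symm q) := by
        rw [integral_comp_polarCoord_symm, integral_indicator hD]; rfl
    _ = _ := by
        have hpre : MeasurableSet (polarCoord.symm ⁻¹' D) := hD.preimage (by fun_prop)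
        have hind : ∀ q : ℝ × ℝ,
            q.1 • D.indicator (f ∘ MeasurableEquiv.finTwoArrow.symm) (polarCoord.symm q) =
              (polarCoord.symm ⁻¹' D).indicator
                (fun q ↦ q.1 • f (MeasurableEquiv.finTwoArrow.symm (polarCoord.symm q))) q := by
          intro q
          simp [indicator]
        simp_rw [hind]
        rw [setIntegral_indicator hpre, polarCoord_target_inter_symm_preimage_disc hr]
        simp only [hsymm, polarCoord_symm_apply]

theorem setIntegral_ball2_eq_intervalIntegral_polar {E : Type*} [NormedAddCommGroup E]
    [NormedSpace ℝ E] {r : ℝ} (hr : 0 ≤ r) {f : V → E} (hf : Continuous f) :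
    ∫ h in ball2 r, f h =
      ∫ ρ in 0..r, ρ • ∫ θ in -π..π, f ![ρ * cos θ, ρ * sin θ] := by
  set F : ℝ × ℝ → E := fun q ↦ q.1 • f ![q.1 * cos q.2, q.1 * sin q.2]
  have hF : IntegrableOn F (Ioo 0 r ×ˢ Ioo (-π) π) := by
    refine (ContinuousOn.integrableOn_compact (isCompact_Icc.prod isCompact_Icc) ?_).mono_set
      (prod_mono Ioo_subset_Icc_self Ioo_subset_Icc_self)
    exact Continuous.continuousOn (by fun_prop)
  rw [setIntegral_ball2_eq_polar hr, Measure.volume_eq_prod, setIntegral_prod F hF,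
    intervalIntegral.integral_of_le hr, integral_Ioc_eq_integral_Ioo]
  refine setIntegral_congr_fun measurableSet_Ioo fun ρ _ ↦ ?_
  rw [intervalIntegral.integral_of_le (by linarith [pi_pos]), integral_Ioc_eq_integral_Ioo,
    ← integral_smul]

lemma exists_mul_cos_add_mul_sin_eq (a b : ℝ) :
    ∃ φ, ∀ θ, a * cos θ + b * sin θ = √(a ^ 2 + b ^ 2) * cos (θ - φ) := by
  refine ⟨Complex.arg ⟨a, b⟩, fun θ ↦ ?_⟩
  have hcos := Complex.norm_mul_cos_arg ⟨a, b⟩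
  have hsin := Complex.norm_mul_sin_arg ⟨a, b⟩
  rw [Complex.norm_def, Complex.normSq_mk, ← sq, ← sq] at hcos hsin
  rw [cos_sub]
  linear_combination (-cos θ) * hcos - sin θ * hsin

lemma integral_cos_mul_cos_sub (x φ : ℝ) :
    ∫ θ in -π..π, cos (x * cos (θ - φ)) = 2 * π * J0 x := by
  have hper : Function.Periodic (fun θ ↦ cos (x * cos θ)) (2 * π) := fun θ ↦ by
    simp only [cos_add_two_pi]
  rw [intervalIntegral.integral_comp_sub_right (fun θ ↦ cos (x * cos θ)),
    show π - φ = -π - φ + 2 * π by ring, hper.intervalIntegral_add_eq (-π - φ) 0, zero_add, J0,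
    mul_inv_cancel_left₀ (by positivity)]

lemma integral_cos_mul_cos_add_mul_sin (a b ρ : ℝ) :
    ∫ θ in -π..π, cos (a * (ρ * cos θ) + b * (ρ * sin θ)) =
      2 * π * J0 (√(a ^ 2 + b ^ 2) * ρ) := by
  obtain ⟨φ, hφ⟩ := exists_mul_cos_add_mul_sin_eq a b
  rw [← integral_cos_mul_cos_sub _ φ]
  congr 1 with θ
  congr 1
  linear_combination ρ * hφ θ

lemma integral_mul_comp_mul_left {c : ℝ} (hc : c ≠ 0) (f : ℝ → ℝ) (r : ℝ) :
    ∫ ρ in 0..r, ρ * f (c * ρ) = (c ^ 2)⁻¹ * ∫ x in 0..c * r, x * f x := by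
  have h := intervalIntegral.integral_comp_mul_left (fun x ↦ x * f x) (a := 0) (b := r) hc
  simp only [mul_zero, smul_eq_mul, mul_assoc, intervalIntegral.integral_const_mul] at h
  rw [sq, mul_inv, mul_assoc, ← h, inv_mul_cancel_left₀ hc]

/-- For every `k ∈ ℤ²`, `k ≠ 0`, and every `r > 0`,
`⨍_{B_r(0)} |e^{ik·h} − 1|² dh = (4/(|k|r)²) ∫₀^{|k|r} x(1 − J₀(x)) dx`. -/
theorem stmt16 (k : Fin 2 → ℤ) (hk : k ≠ 0) (r : ℝ) (hr : 0 < r) :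
    (π * r ^ 2)⁻¹ *
        (∫ h in ball2 r,
          ‖Complex.exp (Complex.I * ((k 0 : ℂ) * (h 0 : ℂ) + (k 1 : ℂ) * (h 1 : ℂ)))
            - 1‖ ^ 2)
      = 4 / (Real.sqrt ((k 0 : ℝ) ^ 2 + (k 1 : ℝ) ^ 2) * r) ^ 2 *
          ∫ x in (0 : ℝ)..(Real.sqrt ((k 0 : ℝ) ^ 2 + (k 1 : ℝ) ^ 2) * r),
            x * (1 - J0 x) := by
  set a : ℝ := (k 0 : ℝ)
  set b : ℝ := (k 1 : ℝ)
  set K := √(a ^ 2 + b ^ 2)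
  have hK : K ≠ 0 := by
    have hab : a ≠ 0 ∨ b ≠ 0 := by simpa [a, b, Function.ne_iff, Fin.exists_fin_two] using hk
    exact Real.sqrt_ne_zero'.2 (by rcases hab with h | h <;> positivity)
  have hintegrand : ∀ h : V,
      ‖Complex.exp (Complex.I * ((k 0 : ℂ) * (h 0 : ℂ) + (k 1 : ℂ) * (h 1 : ℂ))) - 1‖ ^ 2 =
        2 - 2 * cos (a * h 0 + b * h 1) := by
    intro h
    rw [← sq_norm_exp_I_mul_ofReal_sub_one]
    push_cast
    rfl
  have hangular : ∀ ρ : ℝ, ∫ θ in -π..π, (2 - 2 * cos (a * (ρ * cos θ) + b * (ρ * sin θ))) =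
      4 * π * (1 - J0 (K * ρ)) := by
    intro ρ
    rw [intervalIntegral.integral_sub intervalIntegrable_const
      ((by fun_prop : Continuous _).intervalIntegrable _ _), intervalIntegral.integral_const_mul,
      integral_cos_mul_cos_add_mul_sin, intervalIntegral.integral_const, smul_eq_mul]
    ring
  simp_rw [hintegrand]
  rw [setIntegral_ball2_eq_intervalIntegral_polar hr.le (by fun_prop)]
  simp only [Matrix.cons_val_zero, Matrix.cons_val_one, hangular, smul_eq_mul]
  rw [integral_mul_comp_mul_left hK (fun x ↦ 4 * π * (1 - J0 x))]
  simp only [mul_left_comm _ (4 * π), intervalIntegral.integral_const_mul]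
  field_simp
end
end
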